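/- For integers m ≥ n ≥ 3 and 3 ≤ k < n, the generalized k-edge-connectivity of the grid graph satisfies λ_k(P_m □ P_n) = 2, where P_m and P_n are paths on m and n vertices. -/

import Mathlib

/-!
A set `S` of fewer than `min m n` vertices misses some column `a` and some row `b` of the grid.
The column `a` with all rows `y ≠ b` attached forms a connected "comb", the row `b` with all
columns `x ≠ a` attached forms a second one, and the two combs share no edge (a row meets a
column in one vertex, and the spine of each comb is parallel to the teeth of the other). Each
contains `S`, so their spanning trees give `λ_k ≥ 2`. Conversely, a corner has degree `2`, and
every Steiner tree of a set containing the corner and another vertex uses an edge at the corner.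
-/

open SimpleGraph

/-- `T` is an `S`-Steiner tree in `G`: a subgraph of `G` that is a tree containing `S`. -/
def IsSteinerTree {V : Type*} (G : SimpleGraph V) (S : Set V) (T : G.Subgraph) : Prop :=
  S ⊆ T.verts ∧ T.coe.IsTree

/-- There exist `n` pairwise edge-disjoint `S`-Steiner trees in `G`. -/
def HasEDSteinerTrees {V : Type*} (G : SimpleGraph V) (S : Set V) (n : ℕ) : Prop :=
  ∃ f : Fin n → G.Subgraph, (∀ i, IsSteinerTree G S (f i)) ∧
    ∀ i j, i ≠ j → Disjoint (f i).edgeSet (f j).edgeSet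

/-- Generalized local edge-connectivity: max number of pairwise edge-disjoint S-Steiner trees. -/
noncomputable def steinerLambda {V : Type*} (G : SimpleGraph V) (S : Set V) : ℕ :=
  sSup {n | HasEDSteinerTrees G S n}

/-- Generalized k-edge-connectivity. -/
noncomputable def genLambda {V : Type*} [Fintype V] (G : SimpleGraph V) (k : ℕ) : ℕ :=
  sInf {m | ∃ S : Finset V, S.card = k ∧ steinerLambda G ↑S = m}

/-- Ordinary edge-connectivity ("cut" version). -/
noncomputable def edgeConn {V : Type*} [Fintype V] (G : SimpleGraph V) : ℕ :=
  sInf {n | ∃ M : Finset (Sym2 V), M.card = n ∧ ↑M ⊆ G.edgeSet ∧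
    ¬ (G.deleteEdges ↑M).Connected}

/-- Minimum degree. -/
noncomputable def minDeg {V : Type*} [Fintype V] (G : SimpleGraph V) : ℕ :=
  @SimpleGraph.minDegree V G _ (Classical.decRel _)

/-- There exist `n` pairwise edge-disjoint spanning trees of `G`. -/
def HasEDSpanningTrees {V : Type*} (G : SimpleGraph V) (n : ℕ) : Prop :=
  ∃ f : Fin n → G.Subgraph, (∀ i, (f i).IsSpanning ∧ (f i).coe.IsTree) ∧
    ∀ i j, i ≠ j → Disjoint (f i).edgeSet (f j).edgeSet

/-- Maximum number of pairwise edge-disjoint spanning trees. -/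
noncomputable def spanningTreePacking {V : Type*} (G : SimpleGraph V) : ℕ :=
  sSup {n | HasEDSpanningTrees G n}

namespace SimpleGraph

variable {V : Type*} {G : SimpleGraph V}

lemma Subgraph.Connected.exists_isTree_le {H : G.Subgraph} (hH : H.Connected) :
    ∃ T ≤ H, T.verts = H.verts ∧ T.coe.IsTree := by
  obtain ⟨T, hTH, hT⟩ := hH.coe.exists_isTree_le
  let T' : G.Subgraph :=
    { verts := H.verts
      Adj v w := ∃ (hv : v ∈ H.verts) (hw : w ∈ H.verts), T.Adj ⟨v, hv⟩ ⟨w, hw⟩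
      adj_sub := fun ⟨_, _, h⟩ => H.adj_sub (hTH h)
      edge_vert := fun ⟨hv, _, _⟩ => hv
      symm := ⟨fun _ _ ⟨hv, hw, h⟩ => ⟨hw, hv, h.symm⟩⟩ }
  have hT' : T'.coe = T := by
    ext v w
    exact ⟨fun ⟨_, _, h⟩ => h, fun h => ⟨v.2, w.2, h⟩⟩
  exact ⟨T', ⟨le_rfl, fun _ _ ⟨_, _, h⟩ => hTH h⟩, rfl, hT' ▸ hT⟩

lemma Subgraph.connected_biSup_induce {𝓛 : Set (Set V)} {L₀ : Set V} (hL₀ : L₀ ∈ 𝓛)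
    (hconn : ∀ L ∈ 𝓛, ((⊤ : G.Subgraph).induce L).Connected)
    (hmeet : ∀ L ∈ 𝓛, (L ∩ L₀).Nonempty) :
    (⨆ L ∈ 𝓛, (⊤ : G.Subgraph).induce L).Connected := by
  have hle : ∀ L ∈ 𝓛, (⊤ : G.Subgraph).induce L ≤ ⨆ L ∈ 𝓛, (⊤ : G.Subgraph).induce L :=
    fun L hL => le_iSup₂ (f := fun L (_ : L ∈ 𝓛) => (⊤ : G.Subgraph).induce L) L hL
  obtain ⟨r, hr⟩ := (hconn L₀ hL₀).nonempty
  rw [Subgraph.connected_iff', connected_iff_exists_forall_reachable]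
  refine ⟨⟨r, (hle L₀ hL₀).1 hr⟩, fun ⟨w, hw⟩ => ?_⟩
  obtain ⟨L, hL, hwL⟩ : ∃ L ∈ 𝓛, w ∈ L := by simpa [Subgraph.verts_iSup] using hw
  obtain ⟨u, huL, huL₀⟩ := hmeet L hL
  exact ((hconn L₀ hL₀ ⟨r, hr⟩ ⟨u, huL₀⟩).map (Subgraph.inclusion (hle L₀ hL₀))).trans
    ((hconn L hL ⟨u, huL⟩ ⟨w, hwL⟩).map (Subgraph.inclusion (hle L hL)))

lemma Subgraph.disjoint_edgeSet_biSup_induce {𝓛₁ 𝓛₂ : Set (Set V)}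
    (h : ∀ L₁ ∈ 𝓛₁, ∀ L₂ ∈ 𝓛₂, (L₁ ∩ L₂).Subsingleton) :
    Disjoint (⨆ L ∈ 𝓛₁, (⊤ : G.Subgraph).induce L).edgeSet
      (⨆ L ∈ 𝓛₂, (⊤ : G.Subgraph).induce L).edgeSet := by
  rw [Set.disjoint_left]
  intro e he₁ he₂
  induction e using Sym2.ind with | _ u v => ?_
  simp only [Subgraph.mem_edgeSet, Subgraph.iSup_adj, Subgraph.induce_adj, Subgraph.top_adj,
    exists_prop] at he₁ he₂
  obtain ⟨L₁, hL₁, hu₁, hv₁, huv⟩ := he₁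
  obtain ⟨L₂, hL₂, hu₂, hv₂, -⟩ := he₂
  exact huv.ne (h L₁ hL₁ L₂ hL₂ ⟨hu₁, hu₂⟩ ⟨hv₁, hv₂⟩)

end SimpleGraph

section SteinerTrees

variable {V : Type*} {G : SimpleGraph V} {S : Set V} {s t : V}

lemma IsSteinerTree.exists_adj {T : G.Subgraph} (hT : IsSteinerTree G S T) (hs : s ∈ S)
    (ht : t ∈ S) (hst : s ≠ t) : ∃ u, T.Adj s u := by
  have : Nontrivial T.verts := ⟨⟨s, hT.1 hs⟩, ⟨t, hT.1 ht⟩, fun h => hst (congrArg Subtype.val h)⟩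
  exact (Subgraph.preconnected_iff.mpr hT.2.connected.preconnected).exists_adj_of_nontrivial
    ⟨s, hT.1 hs⟩

lemma HasEDSteinerTrees.le_degree {N : ℕ} (h : HasEDSteinerTrees G S N) (hs : s ∈ S)
    (ht : t ∈ S) (hst : s ≠ t) [Fintype (G.neighborSet s)] : N ≤ G.degree s := by
  obtain ⟨T, hT, hdisj⟩ := h
  choose u hu using fun i => (hT i).exists_adj hs ht hst
  have hinj : Function.Injective fun i => (⟨u i, (T i).adj_sub (hu i)⟩ : G.neighborSet s) := by
    intro i j hij
    by_contra hne
    have hu_eq : u i = u j := congrArg Subtype.val hij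
    exact Set.disjoint_left.mp (hdisj i j hne) (Subgraph.mem_edgeSet.mpr (hu i))
      (hu_eq ▸ Subgraph.mem_edgeSet.mpr (hu j))
  simpa only [Fintype.card_fin, card_neighborSet_eq_degree] using
    Fintype.card_le_of_injective _ hinj

lemma hasEDSteinerTrees_of_connected {N : ℕ} (H : Fin N → G.Subgraph)
    (hconn : ∀ i, (H i).Connected) (hS : ∀ i, S ⊆ (H i).verts)
    (hdisj : Pairwise fun i j => Disjoint (H i).edgeSet (H j).edgeSet) :
    HasEDSteinerTrees G S N := by
  choose T hTH hverts htree using fun i => (hconn i).exists_isTree_le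
  refine ⟨T, fun i => ⟨(hverts i).symm ▸ hS i, htree i⟩, fun i j hij => ?_⟩
  exact (hdisj hij).mono (Subgraph.edgeSet_mono (hTH i)) (Subgraph.edgeSet_mono (hTH j))

lemma steinerLambda_le_degree (hs : s ∈ S) (ht : t ∈ S) (hst : s ≠ t)
    [Fintype (G.neighborSet s)] : steinerLambda G S ≤ G.degree s :=
  csSup_le ⟨0, Fin.elim0, Fin.rec0, Fin.rec0⟩ fun _ h => h.le_degree hs ht hst

lemma HasEDSteinerTrees.le_steinerLambda {N : ℕ} (h : HasEDSteinerTrees G S N) (hs : s ∈ S)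
    (ht : t ∈ S) (hst : s ≠ t) [Fintype (G.neighborSet s)] : N ≤ steinerLambda G S :=
  le_csSup ⟨G.degree s, fun _ h' => h'.le_degree hs ht hst⟩ h

lemma genLambda_eq [Fintype V] {k c : ℕ}
    (hc : ∃ S : Finset V, S.card = k ∧ steinerLambda G S = c)
    (hle : ∀ S : Finset V, S.card = k → c ≤ steinerLambda G S) : genLambda G k = c := by
  obtain ⟨S, hSk, hSc⟩ := hc
  exact IsLeast.csInf_eq ⟨⟨S, hSk, hSc⟩, by rintro _ ⟨S', hS'k, rfl⟩; exact hle S' hS'k⟩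

end SteinerTrees

namespace SimpleGraph

variable {α β : Type*} {G : SimpleGraph α} {H : SimpleGraph β}

lemma Preconnected.connected_induce_boxProd_snd [Nonempty α] (hG : G.Preconnected) (b : β) :
    ((⊤ : (G □ H).Subgraph).induce {v | v.2 = b}).Connected := by
  rw [← connected_induce_iff]
  refine (Connected.mk hG).map
    ⟨fun a => ⟨(a, b), rfl⟩, fun h => boxProd_adj.mpr (.inl ⟨h, rfl⟩)⟩ ?_
  rintro ⟨⟨a, b'⟩, rfl : b' = b⟩
  exact ⟨a, rfl⟩

lemma Preconnected.connected_induce_boxProd_fst [Nonempty β] (hH : H.Preconnected) (a : α) :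
    ((⊤ : (G □ H).Subgraph).induce {v | v.1 = a}).Connected := by
  rw [← connected_induce_iff]
  refine (Connected.mk hH).map
    ⟨fun b => ⟨(a, b), rfl⟩, fun h => boxProd_adj.mpr (.inr ⟨h, rfl⟩)⟩ ?_
  rintro ⟨⟨a', b⟩, rfl : a' = a⟩
  exact ⟨b, rfl⟩

variable (G H) in
def columnComb (a : α) (b : β) : (G □ H).Subgraph :=
  ⨆ L ∈ insert {v | v.1 = a} ((fun y => {v | v.2 = y}) '' {b}ᶜ), (⊤ : (G □ H).Subgraph).induce L

variable (G H) in
def rowComb (a : α) (b : β) : (G □ H).Subgraph :=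
  ⨆ L ∈ insert {v | v.2 = b} ((fun x => {v | v.1 = x}) '' {a}ᶜ), (⊤ : (G □ H).Subgraph).induce L

lemma connected_columnComb (hG : G.Preconnected) (hH : H.Preconnected) (a : α) (b : β) :
    (columnComb G H a b).Connected := by
  have : Nonempty α := ⟨a⟩
  have : Nonempty β := ⟨b⟩
  refine Subgraph.connected_biSup_induce (Set.mem_insert _ _) ?_ ?_ <;>
    simp only [Set.forall_mem_insert, Set.forall_mem_image]
  · exact ⟨hH.connected_induce_boxProd_fst a, fun y _ => hG.connected_induce_boxProd_snd y⟩
  · exact ⟨⟨(a, b), rfl, rfl⟩, fun y _ => ⟨(a, y), rfl, rfl⟩⟩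

lemma connected_rowComb (hG : G.Preconnected) (hH : H.Preconnected) (a : α) (b : β) :
    (rowComb G H a b).Connected := by
  have : Nonempty α := ⟨a⟩
  have : Nonempty β := ⟨b⟩
  refine Subgraph.connected_biSup_induce (Set.mem_insert _ _) ?_ ?_ <;>
    simp only [Set.forall_mem_insert, Set.forall_mem_image]
  · exact ⟨hG.connected_induce_boxProd_snd b, fun x _ => hH.connected_induce_boxProd_fst x⟩
  · exact ⟨⟨(a, b), rfl, rfl⟩, fun x _ => ⟨(x, b), rfl, rfl⟩⟩

lemma disjoint_edgeSet_columnComb_rowComb (a : α) (b : β) :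
    Disjoint (columnComb G H a b).edgeSet (rowComb G H a b).edgeSet := by
  refine Subgraph.disjoint_edgeSet_biSup_induce ?_
  simp only [Set.forall_mem_insert, Set.forall_mem_image]
  refine ⟨⟨?_, fun x hx => ?_⟩, fun y hy => ⟨?_, fun x _ => ?_⟩⟩ <;>
    rintro u ⟨hu₁, hu₂⟩ v ⟨hv₁, hv₂⟩ <;> simp_all [Prod.ext_iff]

theorem hasEDSteinerTrees_boxProd_two (hG : G.Preconnected) (hH : H.Preconnected)
    {S : Set (α × β)} {a : α} {b : β} (hSa : ∀ v ∈ S, v.1 ≠ a) (hSb : ∀ v ∈ S, v.2 ≠ b) :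
    HasEDSteinerTrees (G □ H) S 2 := by
  have hdisj := disjoint_edgeSet_columnComb_rowComb (G := G) (H := H) a b
  refine hasEDSteinerTrees_of_connected ![columnComb G H a b, rowComb G H a b] ?_ ?_ ?_ <;>
    simp only [Pairwise, Fin.forall_fin_two, Matrix.cons_val_zero, Matrix.cons_val_one]
  · exact ⟨connected_columnComb hG hH a b, connected_rowComb hG hH a b⟩
  · constructor <;> intro v hv <;>
      simp only [columnComb, rowComb, Subgraph.verts_iSup, Set.mem_iUnion]
    · exact ⟨{w | w.2 = v.2}, Set.mem_insert_of_mem _ ⟨v.2, hSb v hv, rfl⟩, rfl⟩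
    · exact ⟨{w | w.1 = v.1}, Set.mem_insert_of_mem _ ⟨v.1, hSa v hv, rfl⟩, rfl⟩
  · exact ⟨⟨absurd rfl, fun _ => hdisj⟩, fun _ => hdisj.symm, absurd rfl⟩

end SimpleGraph

lemma Finset.exists_forall_ne_of_card_lt {ι α : Type*} [Fintype α] (S : Finset ι) (f : ι → α)
    (h : S.card < Fintype.card α) : ∃ a, ∀ i ∈ S, f i ≠ a := by
  classical
  obtain ⟨a, -, ha⟩ := Finset.exists_mem_notMem_of_card_lt_card
    (S.card_image_le.trans_lt (h.trans_eq Finset.card_univ.symm) : (S.image f).card < _)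
  exact ⟨a, fun i hi hia => ha (Finset.mem_image.mpr ⟨i, hi, hia⟩)⟩

lemma hasEDSteinerTrees_pathGraph_boxProd_two {m n : ℕ} {S : Finset (Fin m × Fin n)}
    (hm : S.card < m) (hn : S.card < n) :
    HasEDSteinerTrees (pathGraph m □ pathGraph n) S 2 := by
  obtain ⟨a, ha⟩ := S.exists_forall_ne_of_card_lt Prod.fst (by simpa using hm)
  obtain ⟨b, hb⟩ := S.exists_forall_ne_of_card_lt Prod.snd (by simpa using hn)
  exact hasEDSteinerTrees_boxProd_two (pathGraph_preconnected m) (pathGraph_preconnected n) ha hb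

lemma degree_pathGraph_zero_le_one {m : ℕ} (hm : 0 < m)
    [Fintype ((pathGraph m).neighborSet ⟨0, hm⟩)] : (pathGraph m).degree ⟨0, hm⟩ ≤ 1 := by
  rw [← card_neighborSet_eq_degree, Fintype.card_le_one_iff]
  rintro ⟨u, hu⟩ ⟨v, hv⟩
  simp only [mem_neighborSet, pathGraph_adj] at hu hv
  exact Subtype.ext (Fin.ext (show u.val = v.val by omega))

theorem stmt10_general (m n k : ℕ) (hmn : n ≤ m) (hk3 : 3 ≤ k) (hkn : k < n) :
    genLambda (pathGraph m □ pathGraph n) k = 2 := by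
  classical
  have two_le (S : Finset (Fin m × Fin n)) (hS : S.card = k) :
      2 ≤ steinerLambda (pathGraph m □ pathGraph n) S := by
    obtain ⟨s, hs, t, ht, hst⟩ := Finset.one_lt_card.mp (by omega : 1 < S.card)
    exact (hasEDSteinerTrees_pathGraph_boxProd_two (by omega) (by omega)).le_steinerLambda
      hs ht hst
  let c₀ : Fin m × Fin n := (⟨0, by omega⟩, ⟨0, by omega⟩)
  let c₁ : Fin m × Fin n := (⟨0, by omega⟩, ⟨1, by omega⟩)
  have hc : c₀ ≠ c₁ := by simp [c₀, c₁, Prod.ext_iff]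
  obtain ⟨S₀, hS₀, -, hS₀k⟩ := Finset.exists_subsuperset_card_eq (n := k)
    (Finset.subset_univ {c₀, c₁}) (Finset.card_le_two.trans (by omega))
    (by simp only [Finset.card_univ, Fintype.card_prod, Fintype.card_fin]; nlinarith)
  refine genLambda_eq ⟨S₀, hS₀k, le_antisymm ?_ (two_le S₀ hS₀k)⟩ two_le
  calc steinerLambda (pathGraph m □ pathGraph n) S₀
      ≤ (pathGraph m □ pathGraph n).degree c₀ :=
        steinerLambda_le_degree (hS₀ (by simp)) (hS₀ (by simp)) hc
    _ = (pathGraph m).degree c₀.1 + (pathGraph n).degree c₀.2 := degree_boxProd c₀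
    _ ≤ 2 := add_le_add (degree_pathGraph_zero_le_one _) (degree_pathGraph_zero_le_one _)

/-- for m ≥ n ≥ 3 and 3 ≤ k < n, λ_k(P_m □ P_n) = 2. -/
theorem stmt10 (m n k : ℕ) (hn : 3 ≤ n) (hmn : n ≤ m) (hk3 : 3 ≤ k) (hkn : k < n) :
    genLambda (pathGraph m □ pathGraph n) k = 2 :=
  stmt10_general m n k hmn hk3 hkn
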